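/- arXiv:1709.10410 — 4 statements merged into one kernel-verified Lean document; each statement's English description precedes it below -/
import Mathlib

section
/- Let μ be a nonzero complex number and Φ(z) = z·q(z)^T/(1 − γ·p(z))^T a rational function analytic on the closed unit disk (with 1 − γ·p(z) ≠ 0 there). Then the polynomial λ ↦ (λ^N − γ λ^N p(1/λ))^T − μ λ^{T−1}(λ^{N−1} q(1/λ))^T has all its roots in the open unit disk if and only if 1/μ does not belong to the image Φ(D̄) of the closed unit disk under Φ. -/
/-!
For `λ ≠ 0`, factoring `λ^(N-1)` out of each reversed sum gives
`F λ = λ^(N T - 1) (λ (1 - γ p(1/λ))^T - μ q(1/λ)^T)`, so the roots of `F` with `|λ| ≥ 1` are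
exactly the inverses of the points `w ≠ 0` of the closed unit disk with `Φ w = 1/μ`. The point
`w = 0` never occurs, as `Φ 0 = 0 ≠ 1/μ`.
-/

open Finset

variable {K : Type*} [Field K]

theorem sum_mul_pow_sub_eq_pow_mul_sum_inv_pow (c : ℕ → K) {x : K} (hx : x ≠ 0) (N : ℕ) :
    ∑ j ∈ range N, c j * x ^ (N - 1 - j) = x ^ (N - 1) * ∑ j ∈ range N, c j * x⁻¹ ^ j := by
  rw [mul_sum]
  refine sum_congr rfl fun j hj => ?_
  rw [pow_sub₀ x hx (by grind), inv_pow]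
  ring

theorem sum_mul_pow_sub_eq_pow_mul_sum_inv_pow_succ (c : ℕ → K) {x : K} (hx : x ≠ 0) (N : ℕ) :
    ∑ j ∈ range N, c j * x ^ (N - 1 - j) = x ^ N * ∑ j ∈ range N, c j * x⁻¹ ^ (j + 1) := by
  rw [mul_sum]
  refine sum_congr rfl fun j hj => ?_
  rw [show N - 1 - j = N - (j + 1) by omega, pow_sub₀ x hx (by grind), inv_pow]
  ring

theorem charPoly_eq_pow_mul_of_ne_zero {x : K} (hx : x ≠ 0) {N T : ℕ} (hN : 0 < N) (hT : 0 < T)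
    (γ μ : K) (c d : ℕ → K) :
    (x ^ N - γ * ∑ j ∈ range N, d j * x ^ (N - 1 - j)) ^ T
        - μ * x ^ (T - 1) * (∑ j ∈ range N, c j * x ^ (N - 1 - j)) ^ T =
      x ^ (N * T - 1) * (x * (1 - γ * ∑ j ∈ range N, d j * x⁻¹ ^ (j + 1)) ^ T
        - μ * (∑ j ∈ range N, c j * x⁻¹ ^ j) ^ T) := by
  rw [sum_mul_pow_sub_eq_pow_mul_sum_inv_pow c hx, sum_mul_pow_sub_eq_pow_mul_sum_inv_pow_succ d hx]
  generalize ∑ j ∈ range N, d j * x⁻¹ ^ (j + 1) = P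
  generalize ∑ j ∈ range N, c j * x⁻¹ ^ j = Q
  rw [show x ^ N - γ * (x ^ N * P) = x ^ N * (1 - γ * P) by ring, mul_pow, mul_pow, ← pow_mul,
    ← pow_mul]
  obtain ⟨n, rfl⟩ := Nat.exists_eq_add_of_lt hN
  obtain ⟨t, rfl⟩ := Nat.exists_eq_add_of_lt hT
  rw [show (0 + n + 1) * (0 + t + 1) - 1 = t + n * (t + 1) by ring_nf; omega]
  simp only [zero_add, Nat.add_sub_cancel]
  ring

theorem mul_div_eq_one_div_iff {w D Q μ : K} (hw : w ≠ 0) (hD : D ≠ 0) (hμ : μ ≠ 0) :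
    w * Q / D = 1 / μ ↔ w⁻¹ * D = μ * Q := by
  rw [div_eq_div_iff hD hμ, eq_comm, inv_mul_eq_iff_eq_mul₀ hw]
  constructor <;> intro h <;> linear_combination h

open Complex Metric

theorem inv_mem_closedBall_zero_one {𝕜 : Type*} [NormedDivisionRing 𝕜] {x : 𝕜} (hx : 1 ≤ ‖x‖) :
    x⁻¹ ∈ closedBall (0 : 𝕜) 1 := by
  rw [mem_closedBall_zero_iff, norm_inv]
  exact inv_le_one_of_one_le₀ hx

theorem stmt0_general (T N : ℕ) (hT : 0 < T) (hN : 0 < N) (γ : ℝ)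
    (a b : ℕ → ℂ) (μ : ℂ) (hμ : μ ≠ 0)
    (q : ℂ → ℂ) (hq : ∀ z, q z = ∑ j ∈ Finset.range N, a j * z ^ j)
    (p : ℂ → ℂ) (hp : ∀ z, p z = ∑ j ∈ Finset.range N, b j * z ^ (j + 1))
    (hden : ∀ z ∈ closedBall (0:ℂ) 1, 1 - (γ:ℂ) * p z ≠ 0)
    (Φ : ℂ → ℂ) (hΦ : ∀ z, Φ z = z * (q z) ^ T / (1 - (γ:ℂ) * p z) ^ T)
    (F : ℂ → ℂ)
    (hF : ∀ lam : ℂ,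
      F lam = (lam ^ N - (γ:ℂ) * ∑ j ∈ Finset.range N, b j * lam ^ (N - 1 - j)) ^ T
        - μ * lam ^ (T - 1) * (∑ j ∈ Finset.range N, a j * lam ^ (N - 1 - j)) ^ T) :
    (∀ lam : ℂ, F lam = 0 → ‖lam‖ < 1) ↔ 1 / μ ∉ Φ '' closedBall (0:ℂ) 1 := by
  have hroot : ∀ lam : ℂ, 1 ≤ ‖lam‖ → (F lam = 0 ↔ Φ lam⁻¹ = 1 / μ) := by
    intro lam hlam
    have hlam0 : lam ≠ 0 := norm_pos_iff.mp (by linarith)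
    have hden' := pow_ne_zero T (hden _ (inv_mem_closedBall_zero_one hlam))
    rw [hF, charPoly_eq_pow_mul_of_ne_zero hlam0 hN hT, ← hq, ← hp, mul_eq_zero,
      or_iff_right (pow_ne_zero _ hlam0), sub_eq_zero, hΦ,
      mul_div_eq_one_div_iff (inv_ne_zero hlam0) hden' hμ, inv_inv]
  constructor
  · rintro hstable ⟨w, hw, hΦw⟩
    have hw0 : w ≠ 0 := by
      rintro rfl
      simp [hΦ, hμ.symm] at hΦw
    have hwinv : 1 ≤ ‖w⁻¹‖ := by
      rw [norm_inv]
      exact one_le_inv₀ (norm_pos_iff.mpr hw0) |>.mpr (mem_closedBall_zero_iff.mp hw)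
    have := hstable _ ((hroot _ hwinv).mpr (by rwa [inv_inv]))
    linarith
  · intro hΦ1 lam hFlam
    by_contra! hlam
    exact hΦ1 ⟨lam⁻¹, inv_mem_closedBall_zero_one hlam, (hroot lam hlam).mp hFlam⟩

/-- Schur stability of the characteristic polynomial of the combined
control scheme is equivalent to `1/μ` avoiding the image of the closed unit disk
under `Φ(z) = z q(z)^T / (1 - γ p(z))^T`. -/
theorem stmt0 (T N : ℕ) (hT : 0 < T) (hN : 0 < N) (γ : ℝ) (hγ : γ ∈ Set.Ico (0:ℝ) 1)
    (a b : ℕ → ℂ) (μ : ℂ) (hμ : μ ≠ 0)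
    (q : ℂ → ℂ) (hq : ∀ z, q z = ∑ j ∈ Finset.range N, a j * z ^ j)
    (p : ℂ → ℂ) (hp : ∀ z, p z = ∑ j ∈ Finset.range N, b j * z ^ (j + 1))
    (hden : ∀ z ∈ closedBall (0:ℂ) 1, 1 - (γ:ℂ) * p z ≠ 0)
    (Φ : ℂ → ℂ) (hΦ : ∀ z, Φ z = z * (q z) ^ T / (1 - (γ:ℂ) * p z) ^ T)
    (F : ℂ → ℂ)
    (hF : ∀ lam : ℂ,
      F lam = (lam ^ N - (γ:ℂ) * ∑ j ∈ Finset.range N, b j * lam ^ (N - 1 - j)) ^ T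
        - μ * lam ^ (T - 1) * (∑ j ∈ Finset.range N, a j * lam ^ (N - 1 - j)) ^ T) :
    (∀ lam : ℂ, F lam = 0 → ‖lam‖ < 1) ↔ 1 / μ ∉ Φ '' closedBall (0:ℂ) 1 :=
  stmt0_general T N hT hN γ a b μ hμ q hq p hp hden Φ hΦ F hF
end

section
/- For any complex μ, the polynomial λ ↦ (λ − ε)^T − μ(1 − ε)^T λ^{T−1} (with 0 ≤ ε < 1, T ≥ 1) has all roots in the open unit disk D if and only if 1/μ ∉ Φ(D̄), where Φ(z) = (1−ε)^T z/(1−εz)^T. -/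
open Complex Metric

/-! Substituting `z = λ⁻¹` turns the root equation `(λ - ε)^T = μ (1-ε)^T λ^{T-1}` into
`Φ z = 1/μ`, and `λ` lies outside the open unit disk exactly when `z` lies in the closed one
(the root `λ = 0` is harmless, and `1 - ε z` never vanishes on `D̄` because `|ε| < 1`). -/

lemma one_sub_mul_ne_zero_of_norm_lt_one {K : Type*} [NormedDivisionRing K] {c z : K}
    (hc : ‖c‖ < 1) (hz : ‖z‖ ≤ 1) : 1 - c * z ≠ 0 := by
  intro h
  have hcz : ‖c * z‖ = 1 := by rw [← sub_eq_zero.1 h, norm_one]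
  have : ‖c‖ * ‖z‖ ≤ ‖c‖ := mul_le_of_le_one_right (norm_nonneg c) hz
  rw [norm_mul] at hcz
  linarith

lemma root_iff_inv_div_eq_inv {K : Type*} [Field K] {T : ℕ} (hT : 0 < T) {a c μ lam : K}
    (hμ : μ ≠ 0) (hlam : lam ≠ 0) (hden : 1 - a * lam⁻¹ ≠ 0) :
    (lam - a) ^ T - μ * c * lam ^ (T - 1) = 0 ↔
      c * lam⁻¹ / (1 - a * lam⁻¹) ^ T = 1 / μ := by
  obtain ⟨n, rfl⟩ : ∃ n, T = n + 1 := ⟨T - 1, (Nat.succ_pred_eq_of_pos hT).symm⟩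
  have hfactor : (lam - a) ^ (n + 1) - μ * c * lam ^ n
      = lam ^ (n + 1) * ((1 - a * lam⁻¹) ^ (n + 1) - μ * c * lam⁻¹) := by
    have hlin : lam * (1 - a * lam⁻¹) = lam - a := by field_simp
    have hpow : lam ^ (n + 1) * lam⁻¹ = lam ^ n := by rw [pow_succ, mul_inv_cancel_right₀ hlam]
    rw [mul_sub, ← mul_pow, hlin]
    linear_combination (μ * c) * hpow
  rw [Nat.add_sub_cancel, hfactor, mul_eq_zero, or_iff_right (pow_ne_zero _ hlam),
    div_eq_div_iff (pow_ne_zero _ hden) hμ, sub_eq_zero]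
  constructor <;> intro h <;> linear_combination -h

/-- all roots of `(λ - ε)^T - μ (1-ε)^T λ^{T-1}` lie in the open unit
disk iff `1/μ ∉ Φ(D̄)` where `Φ(z) = (1-ε)^T z/(1-εz)^T`. -/
theorem stmt1 (T : ℕ) (hT : 0 < T) (ε : ℝ) (hε : ε ∈ Set.Ico (0:ℝ) 1)
    (μ : ℂ) (hμ : μ ≠ 0)
    (Φ : ℂ → ℂ) (hΦ : ∀ z, Φ z = (1 - (ε:ℂ)) ^ T * z / (1 - (ε:ℂ) * z) ^ T) :
    (∀ lam : ℂ, (lam - (ε:ℂ)) ^ T - μ * (1 - (ε:ℂ)) ^ T * lam ^ (T - 1) = 0 → ‖lam‖ < 1)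
      ↔ 1 / μ ∉ Φ '' closedBall (0:ℂ) 1 := by
  have hε_norm : ‖(ε : ℂ)‖ < 1 := by
    rw [Complex.norm_real, Real.norm_of_nonneg hε.1]; exact hε.2
  have hden (z : ℂ) (hz : ‖z‖ ≤ 1) : 1 - (ε : ℂ) * z ≠ 0 :=
    one_sub_mul_ne_zero_of_norm_lt_one hε_norm hz
  constructor
  · rintro hroots ⟨z, hz, hΦz⟩
    rw [mem_closedBall_zero_iff] at hz
    have hz0 : z ≠ 0 := by
      rintro rfl
      exact hμ (by simpa [hΦ] using hΦz.symm)
    have hroot := (root_iff_inv_div_eq_inv hT hμ (inv_ne_zero hz0)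
      (by rw [inv_inv]; exact hden z hz)).2 (by rw [inv_inv, ← hΦ]; exact hΦz)
    have hinv_lt := hroots _ hroot
    rw [norm_inv] at hinv_lt
    exact hinv_lt.not_ge ((one_le_inv₀ (norm_pos_iff.2 hz0)).2 hz)
  · intro hΦμ lam hroot
    by_contra! hlam
    have hlam0 : lam ≠ 0 := norm_pos_iff.1 (by linarith)
    have hz : ‖lam⁻¹‖ ≤ 1 := by rw [norm_inv]; exact inv_le_one_of_one_le₀ hlam
    exact hΦμ ⟨lam⁻¹, mem_closedBall_zero_iff.2 hz, by
      rw [hΦ]; exact (root_iff_inv_div_eq_inv hT hμ hlam0 (hden _ hz)).1 hroot⟩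
end

section
/- For T ≥ 3 and ε ∈ [0, 1/(T−1)), the function Φ(z) = (1−ε)^T z/(1−εz)^T is injective on the open unit disk D; moreover for ε > 1/(T−1) (with ε < 1) it fails to be injective on D. -/
/-!
Clearing denominators, `Φ(z) = Φ(w)` becomes `z (1 - εw)^T = w (1 - εz)^T`. Expanding both powers
binomially, the difference of the two sides is `z - w` plus a sum whose `k`-th term contains
`zw (w^k - z^k)`, which on the disk has norm at most `k |z - w|`. The resulting Lipschitz constant
`∑ C(T, k+1) ε^(k+1) k = Tε(1+ε)^(T-1) - (1+ε)^T + 1` is below `1` exactly when `ε (T - 1) < 1`,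
which forces `z = w`.

For `ε (T - 1) > 1`, the real function `x ↦ x / (1 - εx)^T` has a strict local minimum at
`c = -1/((T - 1) ε) ∈ (-1, 0)`, so it is not injective on `[a, 0]` for any `a ∈ (-1, c)`.
-/

open Complex Metric Finset Set

theorem sum_range_choose_succ_mul_pow_succ_mul {R : Type*} [CommRing R] (T : ℕ) (x : R) :
    ∑ k ∈ range T, (T.choose (k + 1) : R) * x ^ (k + 1) * k
      = T * x * (1 + x) ^ (T - 1) - (1 + x) ^ T + 1 := by
  cases T with
  | zero => simp
  | succ m =>
    have hweighted : ∑ k ∈ range (m + 1), ((m + 1).choose (k + 1) : R) * x ^ (k + 1) * (k + 1)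
        = (m + 1) * x * (1 + x) ^ m := by
      rw [add_comm 1 x, add_pow, mul_sum]
      refine sum_congr rfl fun k _ => ?_
      have h : (((m + 1).choose (k + 1) * (k + 1) : ℕ) : R) = ((m + 1) * m.choose k : ℕ) := by
        rw [Nat.add_one_mul_choose_eq]
      push_cast at h
      linear_combination x ^ (k + 1) * h
    have hbinom : ∑ k ∈ range (m + 1), ((m + 1).choose (k + 1) : R) * x ^ (k + 1)
        = (1 + x) ^ (m + 1) - 1 := by
      have h := add_pow x 1 (m + 1)
      rw [sum_range_succ'] at h
      simp only [one_pow, mul_one, pow_zero, Nat.choose_zero_right, Nat.cast_one] at h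
      rw [add_comm 1 x, h, add_sub_cancel_right]
      exact sum_congr rfl fun k _ => mul_comm _ _
    have hsplit : ∑ k ∈ range (m + 1), ((m + 1).choose (k + 1) : R) * x ^ (k + 1) * k
        = ∑ k ∈ range (m + 1), ((m + 1).choose (k + 1) : R) * x ^ (k + 1) * (k + 1)
          - ∑ k ∈ range (m + 1), ((m + 1).choose (k + 1) : R) * x ^ (k + 1) := by
      rw [← sum_sub_distrib]
      exact sum_congr rfl fun k _ => by ring
    rw [hsplit, hweighted, hbinom, Nat.add_sub_cancel]
    push_cast
    ring

theorem sum_range_choose_succ_mul_pow_succ_mul_lt_one {T : ℕ} {x : ℝ} (hx : 0 ≤ x)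
    (hxT : x * ((T : ℝ) - 1) < 1) :
    ∑ k ∈ range T, (T.choose (k + 1) : ℝ) * x ^ (k + 1) * k < 1 := by
  rw [sum_range_choose_succ_mul_pow_succ_mul]
  cases T with
  | zero => simp
  | succ m =>
    push_cast at hxT ⊢
    rw [pow_succ]
    have : 0 < (1 + x) ^ m := by positivity
    nlinarith

theorem norm_pow_sub_pow_le {R : Type*} [NormedCommRing R] [NormOneClass R] {a b : R}
    (ha : ‖a‖ ≤ 1) (hb : ‖b‖ ≤ 1) (n : ℕ) : ‖a ^ n - b ^ n‖ ≤ n * ‖a - b‖ := by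
  induction n with
  | zero => simp
  | succ n ih =>
    calc ‖a ^ (n + 1) - b ^ (n + 1)‖ = ‖a * (a ^ n - b ^ n) + (a - b) * b ^ n‖ := by ring_nf
      _ ≤ ‖a‖ * ‖a ^ n - b ^ n‖ + ‖a - b‖ * ‖b‖ ^ n := by
        grw [norm_add_le, norm_mul_le, norm_mul_le, norm_pow_le]
      _ ≤ 1 * (n * ‖a - b‖) + ‖a - b‖ * 1 := by
        gcongr
        exact pow_le_one₀ (norm_nonneg b) hb
      _ = (n + 1 : ℕ) * ‖a - b‖ := by push_cast; ring

theorem mul_one_sub_mul_pow_sub_mul_one_sub_mul_pow {R : Type*} [CommRing R] (T : ℕ) (e z w : R) :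
    z * (1 - e * w) ^ T - w * (1 - e * z) ^ T
      = z - w
        + ∑ k ∈ range T, (T.choose (k + 1) : R) * (-e) ^ (k + 1) * (z * w * (w ^ k - z ^ k)) := by
  rw [sub_eq_neg_add 1, sub_eq_neg_add 1, add_pow, add_pow, mul_sum, mul_sum, ← sum_sub_distrib,
    sum_range_succ']
  simp only [pow_zero, one_pow, Nat.choose_zero_right]
  rw [add_comm]
  congr 1
  · ring
  · exact sum_congr rfl fun k _ => by ring

theorem norm_mul_one_sub_mul_pow_sub_sub_le {𝕜 : Type*} [NormedField 𝕜] (T : ℕ) (e : 𝕜)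
    {z w : 𝕜} (hz : ‖z‖ ≤ 1) (hw : ‖w‖ ≤ 1) :
    ‖z * (1 - e * w) ^ T - w * (1 - e * z) ^ T - (z - w)‖
      ≤ (∑ k ∈ range T, (T.choose (k + 1) : ℝ) * ‖e‖ ^ (k + 1) * k) * ‖z - w‖ := by
  rw [mul_one_sub_mul_pow_sub_mul_one_sub_mul_pow, add_sub_cancel_left, sum_mul]
  refine (norm_sum_le _ _).trans (sum_le_sum fun k _ => ?_)
  have hchoose : ‖(T.choose (k + 1) : 𝕜)‖ ≤ T.choose (k + 1) := by
    simpa using Nat.norm_cast_le (α := 𝕜) (T.choose (k + 1))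
  have hzw : ‖z‖ * ‖w‖ ≤ 1 := mul_le_one₀ hz (norm_nonneg w) hw
  rw [norm_mul, norm_mul, norm_mul, norm_mul, norm_pow, norm_neg, norm_sub_rev z w]
  calc ‖(T.choose (k + 1) : 𝕜)‖ * ‖e‖ ^ (k + 1) * (‖z‖ * ‖w‖ * ‖w ^ k - z ^ k‖)
      ≤ T.choose (k + 1) * ‖e‖ ^ (k + 1) * (1 * (k * ‖w - z‖)) := by
        gcongr
        exact norm_pow_sub_pow_le hw hz k
    _ = T.choose (k + 1) * ‖e‖ ^ (k + 1) * k * ‖w - z‖ := by ring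

theorem injOn_div_one_sub_mul_pow {𝕜 : Type*} [NormedField 𝕜] {T : ℕ} {e : 𝕜} (he : ‖e‖ ≤ 1)
    (heT : ‖e‖ * ((T : ℝ) - 1) < 1) :
    InjOn (fun z => z / (1 - e * z) ^ T) (ball 0 1) := by
  intro z hz w hw hzw
  rw [mem_ball_zero_iff] at hz hw
  have hden {u : 𝕜} (hu : ‖u‖ < 1) : (1 - e * u) ^ T ≠ 0 := by
    refine pow_ne_zero _ (sub_ne_zero.2 fun h => ?_)
    have : ‖e * u‖ < 1 := by rw [norm_mul]; nlinarith [norm_nonneg e, norm_nonneg u]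
    simp [← h] at this
  have hcross : z * (1 - e * w) ^ T - w * (1 - e * z) ^ T = 0 := by
    rw [sub_eq_zero, ← div_eq_div_iff (hden hz) (hden hw)]
    exact hzw
  have hest := norm_mul_one_sub_mul_pow_sub_sub_le T e hz.le hw.le
  rw [hcross, zero_sub, norm_neg] at hest
  have hlt := sum_range_choose_succ_mul_pow_succ_mul_lt_one (norm_nonneg e) heT
  by_contra hne
  have : 0 < ‖z - w‖ := norm_pos_iff.2 (sub_ne_zero.2 hne)
  nlinarith

theorem ContinuousOn.not_injOn_Icc_of_lt_of_lt {α δ : Type*} [ConditionallyCompleteLinearOrder α]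
    [TopologicalSpace α] [OrderTopology α] [DenselyOrdered α] [LinearOrder δ] [TopologicalSpace δ]
    [OrderClosedTopology δ] {f : α → δ} {a b c : α} (hf : ContinuousOn f (Icc a b))
    (hac : a ≤ c) (hcb : c ≤ b) (hfa : f c < f a) (hfb : f c < f b) : ¬ InjOn f (Icc a b) := by
  intro hinj
  have ha : a ∈ Icc a b := left_mem_Icc.2 (hac.trans hcb)
  have hb : b ∈ Icc a b := right_mem_Icc.2 (hac.trans hcb)
  have hc : c ∈ Icc a b := ⟨hac, hcb⟩
  rcases hf.strictMonoOn_of_injOn_Icc' (hac.trans hcb) hinj with hmono | hanti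
  · exact (hmono.monotoneOn ha hc hac).not_gt hfa
  · exact (hanti.antitoneOn hc hb hcb).not_gt hfb

theorem continuousOn_div_one_sub_mul_pow (T : ℕ) {ε : ℝ} (hε : 0 ≤ ε) :
    ContinuousOn (fun x : ℝ => x / (1 - ε * x) ^ T) (Iic 0) :=
  continuousOn_id.div (by fun_prop) fun x hx => pow_ne_zero T (by nlinarith [hx.out])

theorem strictAntiOn_div_one_sub_mul_pow {T : ℕ} {ε : ℝ} (hT : 1 < T) (hε : 0 < ε) :
    StrictAntiOn (fun x : ℝ => x / (1 - ε * x) ^ T) (Iic (-(((T : ℝ) - 1) * ε)⁻¹)) := by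
  have hTε : 0 < ((T : ℝ) - 1) * ε := mul_pos (by norm_num; exact_mod_cast hT) hε
  have hc : -(((T : ℝ) - 1) * ε)⁻¹ < 0 := neg_neg_of_pos (inv_pos.2 hTε)
  refine strictAntiOn_of_deriv_neg (convex_Iic _)
    ((continuousOn_div_one_sub_mul_pow T hε.le).mono (Iic_subset_Iic.2 hc.le)) fun x hx => ?_
  rw [interior_Iic] at hx
  have hx0 : 0 < 1 - ε * x := by nlinarith [hx.out]
  have hderiv : HasDerivAt (fun y : ℝ => y / (1 - ε * y) ^ T)
      ((1 * (1 - ε * x) ^ T - x * (T * (1 - ε * x) ^ (T - 1) * -(ε * 1))) / ((1 - ε * x) ^ T) ^ 2)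
      x :=
    (hasDerivAt_id' x).div ((((hasDerivAt_id' x).const_mul ε).const_sub 1).pow T) (by positivity)
  rw [hderiv.deriv]
  refine div_neg_of_neg_of_pos ?_ (by positivity)
  -- the numerator factors as `(1 - εx)^(T-1) * (1 + (T - 1) ε x)`
  have hcrit : 1 + ((T : ℝ) - 1) * ε * x < 0 := by
    have := mul_lt_mul_of_pos_left hx.out hTε
    rw [mul_neg, mul_inv_cancel₀ hTε.ne'] at this
    linarith
  have hpow : (1 - ε * x) ^ T = (1 - ε * x) ^ (T - 1) * (1 - ε * x) := by
    rw [← pow_succ, Nat.sub_add_cancel hT.le]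
  rw [hpow]
  nlinarith [mul_neg_of_pos_of_neg (pow_pos hx0 (T - 1)) hcrit]

theorem not_injOn_div_one_sub_mul_pow {T : ℕ} {ε : ℝ} (hT : 1 < T)
    (hεT : 1 < ε * ((T : ℝ) - 1)) :
    ¬ InjOn (fun z : ℂ => z / (1 - ε * z) ^ T) (ball 0 1) := by
  intro hinj
  have hT1 : (0 : ℝ) < T - 1 := by norm_num; exact_mod_cast hT
  have hε : 0 < ε := pos_of_mul_pos_left (one_pos.trans hεT) hT1.le
  set ψ : ℝ → ℝ := fun x => x / (1 - ε * x) ^ T with hψ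
  set c := -(((T : ℝ) - 1) * ε)⁻¹
  have hc0 : c < 0 := neg_neg_of_pos (inv_pos.2 (mul_pos hT1 hε))
  have hc1 : -1 < c := neg_lt_neg (inv_lt_one_of_one_lt₀ (by linarith))
  have hac : (c - 1) / 2 < c := by linarith
  refine ContinuousOn.not_injOn_Icc_of_lt_of_lt (f := ψ) ?_ hac.le hc0.le ?_ ?_ ?_
  · exact (continuousOn_div_one_sub_mul_pow T hε.le).mono fun x hx => hx.2
  · exact strictAntiOn_div_one_sub_mul_pow hT hε (mem_Iic.2 hac.le) (mem_Iic.2 le_rfl) hac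
  · simpa [hψ] using div_neg_of_neg_of_pos hc0 (pow_pos (by nlinarith) T)
  intro x hx y hy hxy
  have hmem {u : ℝ} (hu : u ∈ Icc ((c - 1) / 2) 0) : (u : ℂ) ∈ ball (0 : ℂ) 1 := by
    rw [mem_ball_zero_iff, norm_real, Real.norm_eq_abs, abs_lt]
    constructor <;> linarith [hu.1, hu.2]
  have hcast (u : ℝ) : (u : ℂ) / (1 - ε * u) ^ T = (ψ u : ℂ) := by push_cast [hψ]; rfl
  exact_mod_cast hinj (hmem hx) (hmem hy) (by simp only [hcast, hxy])

/-- for `T ≥ 3`, `Φ(z) = (1-ε)^T z/(1-εz)^T` is injective on the open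
unit disk iff `ε ∈ [0, 1/(T-1))`; it fails to be injective for `ε ∈ (1/(T-1), 1)`. -/
theorem stmt5 (T : ℕ) (hT : 3 ≤ T) (Φ : ℝ → ℂ → ℂ)
    (hΦ : ∀ (ε : ℝ) (z : ℂ), Φ ε z = (1 - (ε:ℂ)) ^ T * z / (1 - (ε:ℂ) * z) ^ T) :
    (∀ ε : ℝ, ε ∈ Set.Ico 0 (1 / ((T:ℝ) - 1)) → Set.InjOn (Φ ε) (ball (0:ℂ) 1)) ∧
    (∀ ε : ℝ, ε ∈ Set.Ioo (1 / ((T:ℝ) - 1)) 1 → ¬ Set.InjOn (Φ ε) (ball (0:ℂ) 1)) := by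
  have hT1 : (1 : ℝ) ≤ T - 1 := by
    have : (3 : ℝ) ≤ T := by exact_mod_cast hT
    linarith
  have hΦε (ε : ℝ) : Φ ε = (fun u => (1 - (ε : ℂ)) ^ T * u) ∘ fun z => z / (1 - ε * z) ^ T :=
    funext fun z => by simp only [hΦ, Function.comp, mul_div_assoc]
  refine ⟨fun ε ⟨hε0, hεT⟩ => ?_, fun ε ⟨hεT, _⟩ hinj => ?_⟩
  · have hεT : ε * ((T : ℝ) - 1) < 1 := (lt_div_iff₀ (by linarith)).1 hεT
    have hε1 : ε < 1 := by nlinarith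
    have hnorm : ‖(ε : ℂ)‖ = ε := Complex.norm_of_nonneg hε0
    rw [hΦε]
    refine (mul_right_injective₀ (pow_ne_zero T ?_)).comp_injOn
      (injOn_div_one_sub_mul_pow (by rw [hnorm]; exact hε1.le) (by rwa [hnorm]))
    exact sub_ne_zero.2 (by exact_mod_cast hε1.ne')
  · rw [hΦε] at hinj
    exact not_injOn_div_one_sub_mul_pow (by omega) ((div_lt_iff₀ (by linarith)).1 hεT) hinj.of_comp
end

section
/- With q_N = −Σ_{j=1}^N (−1)^j a_j where a_j = 2 tan(π/(2(N+1)))·(1 − j/(N+1))·sin(πj/(N+1)) for j = 1,…,N, one has q_N = tan²(π/(2(N+1))). -/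
/-!
Put `θ = π/(2(N+1))` and `φ = π + 2θ`. Since `(-1)^j sin(2jθ) = sin(jφ)`, the sum is, up to the
factor `2 tan θ/(N+1)`, the Fejér-type sum `Σ_{j=1}^N (N+1-j) sin(jφ)`. Summing the second
differences `2 sin(jφ) - sin((j+1)φ) - sin((j-1)φ) = 2(1 - cos φ) sin(jφ)` by parts against the
weights `N+1-j` evaluates it as `(N+1) sin φ / (2(1 - cos φ))`, because `sin((N+1)φ) = 0`; and
`sin φ / (1 - cos φ) = -sin 2θ / (1 + cos 2θ) = -tan θ`.
-/

open Finset Real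

section SecondDifference

variable {R : Type*} [CommRing R]

theorem sum_Icc_second_difference (s : ℕ → R) (n : ℕ) :
    ∑ j ∈ Icc 1 n, (2 * s j - s (j + 1) - s (j - 1)) = s 1 - s 0 + s n - s (n + 1) := by
  induction n with
  | zero => simp
  | succ n ih =>
    rw [sum_Icc_succ_top (by omega), ih, Nat.add_sub_cancel]
    ring

theorem sum_Icc_mul_second_difference (s : ℕ → R) (n : ℕ) :
    ∑ j ∈ Icc 1 n, ((n : R) + 1 - j) * (2 * s j - s (j + 1) - s (j - 1))
      = ((n : R) + 1) * s 1 - s (n + 1) - n * s 0 := by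
  induction n with
  | zero => simp
  | succ n ih =>
    have hweight : ∀ j ∈ Icc 1 (n + 1),
        (((n + 1 : ℕ) : R) + 1 - j) * (2 * s j - s (j + 1) - s (j - 1))
          = ((n : R) + 1 - j) * (2 * s j - s (j + 1) - s (j - 1))
            + (2 * s j - s (j + 1) - s (j - 1)) := by
      intro j _
      push_cast
      ring
    rw [sum_congr rfl hweight, sum_add_distrib, sum_Icc_succ_top (by omega),
      sum_Icc_second_difference, ih]
    push_cast
    ring

end SecondDifference

theorem sin_second_difference (φ : ℝ) {j : ℕ} (hj : 1 ≤ j) :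
    2 * sin (j * φ) - sin ((j + 1 : ℕ) * φ) - sin ((j - 1 : ℕ) * φ)
      = 2 * (1 - cos φ) * sin (j * φ) := by
  rw [Nat.cast_sub hj]
  push_cast
  rw [add_mul, sub_mul, one_mul, sin_add, sin_sub]
  ring

theorem two_mul_one_sub_cos_mul_sum_sin (φ : ℝ) (n : ℕ) :
    2 * (1 - cos φ) * ∑ j ∈ Icc 1 n, ((n : ℝ) + 1 - j) * sin (j * φ)
      = ((n : ℝ) + 1) * sin φ - sin ((n + 1) * φ) := by
  have h := sum_Icc_mul_second_difference (fun j : ℕ => sin (j * φ)) n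
  rw [sum_congr rfl fun j hj => by rw [sin_second_difference φ (mem_Icc.1 hj).1]] at h
  push_cast at h
  simp only [zero_mul, sin_zero, mul_zero, sub_zero, one_mul] at h
  rw [mul_sum, ← h]
  exact sum_congr rfl fun j _ => by ring

/-- for the optimal coefficients (case `σ = 2`, `T = 1`)
`a_j = 2 tan(π/(2(N+1))) (1 - j/(N+1)) sin(πj/(N+1))`, one has
`q_N = -Σ_{j=1}^N (-1)^j a_j = tan²(π/(2(N+1)))`. -/
theorem stmt13 (N : ℕ) (hN : 0 < N) (a : ℕ → ℝ)
    (ha : ∀ j, 1 ≤ j → j ≤ N → a j =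
      2 * Real.tan (Real.pi / (2 * ((N:ℝ) + 1))) * (1 - (j:ℝ) / ((N:ℝ) + 1))
        * Real.sin (Real.pi * (j:ℝ) / ((N:ℝ) + 1))) :
    -∑ j ∈ Finset.Icc 1 N, (-1:ℝ) ^ j * a j
      = Real.tan (Real.pi / (2 * ((N:ℝ) + 1))) ^ 2 := by
  set θ := π / (2 * ((N : ℝ) + 1)) with hθ
  have hθ_lt : θ < π / 2 := by
    rw [hθ, div_lt_div_iff₀ (by positivity) two_pos]
    nlinarith [pi_pos, show (1 : ℝ) ≤ N by exact_mod_cast hN]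
  have hcos : 0 < cos θ :=
    cos_pos_of_mem_Ioo ⟨by linarith [pi_pos, show 0 < θ by positivity], hθ_lt⟩
  have hterm : ∀ j ∈ Icc 1 N, (-1 : ℝ) ^ j * a j
      = 2 * tan θ / ((N : ℝ) + 1) * (((N : ℝ) + 1 - j) * sin (j * (2 * θ + π))) := by
    intro j hj
    have harg : (j : ℝ) * (2 * θ) = π * j / ((N : ℝ) + 1) := by rw [hθ]; field_simp
    rw [ha j (mem_Icc.1 hj).1 (mem_Icc.1 hj).2, mul_add, sin_add_nat_mul_pi, harg]
    field_simp
  have hvanish : sin (((N : ℝ) + 1) * (2 * θ + π)) = 0 := by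
    have : ((N : ℝ) + 1) * (2 * θ + π) = π + ((N + 1 : ℕ) : ℝ) * π := by
      rw [hθ]; push_cast; field_simp
    rw [this, sin_add_nat_mul_pi, sin_pi, mul_zero]
  have hfejer := two_mul_one_sub_cos_mul_sum_sin (2 * θ + π) N
  rw [hvanish, sub_zero, cos_add_pi, sin_add_pi, cos_two_mul, sin_two_mul] at hfejer
  set S := ∑ j ∈ Icc 1 N, ((N : ℝ) + 1 - j) * sin (j * (2 * θ + π))
  have hS : 2 * cos θ * S = -(((N : ℝ) + 1) * sin θ) :=
    mul_left_cancel₀ (mul_ne_zero two_ne_zero hcos.ne') (by linear_combination hfejer)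
  rw [sum_congr rfl hterm, ← mul_sum, tan_eq_sin_div_cos]
  field_simp
  linear_combination (-sin θ) * hS
end
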